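/- arXiv:2605.12744 — 2 statements merged into one kernel-verified Lean document; each statement's English description precedes it below -/
import Mathlib

section
/- The poset of transfer systems on the three-element chain [2], ordered by inclusion, is order-isomorphic to the lattice N5. -/
/-- The five-element nonmodular lattice `N₅` with `0 < A < C < 1`, `0 < B < 1`,
and `B` incomparable to `A` and `C`. -/
inductive N5 : Type
  | zero | A | B | C | one
  deriving DecidableEq

instance : Fintype N5 :=
  ⟨{N5.zero, N5.A, N5.B, N5.C, N5.one}, fun x => by cases x <;> decide⟩

namespace N5

def leBool : N5 → N5 → Bool
  | zero, _ => true
  | _, one => true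
  | A, A => true
  | A, C => true
  | B, B => true
  | C, C => true
  | _, _ => false

instance : LE N5 := ⟨fun x y => leBool x y = true⟩

instance : DecidableRel ((· ≤ ·) : N5 → N5 → Prop) :=
  fun x y => inferInstanceAs (Decidable (leBool x y = true))

def supFn (x y : N5) : N5 := if leBool x y then y else if leBool y x then x else one
def infFn (x y : N5) : N5 := if leBool x y then x else if leBool y x then y else zero

instance : Lattice N5 where
  le := (· ≤ ·)
  le_refl := by decide
  le_trans := by decide
  le_antisymm := by decide
  sup := supFn
  le_sup_left := by decide
  le_sup_right := by decide
  sup_le := by decide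
  inf := infFn
  inf_le_left := by decide
  inf_le_right := by decide
  le_inf := by decide

end N5

section Defs

variable {L : Type*} [Lattice L]

/-- `llp S a b`: `a ≤ b` and `(a, b)` has the left lifting property with respect to
every pair in `S`. -/
def llp (S : L → L → Prop) (a b : L) : Prop :=
  a ≤ b ∧ ∀ x y, S x y → a ≤ x → b ≤ y → b ≤ x

/-- `rlp S x y`: `x ≤ y` and every pair in `S` has the left lifting property with
respect to `(x, y)`. -/
def rlp (S : L → L → Prop) (x y : L) : Prop :=
  x ≤ y ∧ ∀ a b, S a b → a ≤ x → b ≤ y → b ≤ x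

/-- A transfer system: a reflexive transitive subrelation of `≤` closed under pullbacks. -/
structure IsTransferSystem (T : L → L → Prop) : Prop where
  subLE : ∀ x y, T x y → x ≤ y
  refl : ∀ x, T x x
  trans : ∀ x y z, T x y → T y z → T x z
  pullback : ∀ x y z, T x y → z ≤ y → T (x ⊓ z) z

/-- A cotransfer system: a reflexive transitive subrelation of `≤` closed under pushouts. -/
structure IsCotransferSystem (K : L → L → Prop) : Prop where
  subLE : ∀ x y, K x y → x ≤ y
  refl : ∀ x, K x x
  trans : ∀ x y z, K x y → K y z → K x z
  pushout : ∀ x y z, K x y → x ≤ z → K z (y ⊔ z)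

/-- A wide decomposable subcategory of a lattice. -/
structure IsWideDecomposable (W : L → L → Prop) : Prop where
  subLE : ∀ x y, W x y → x ≤ y
  refl : ∀ x, W x x
  trans : ∀ x y z, W x y → W y z → W x z
  decomp : ∀ x y z, W x z → x ≤ y → y ≤ z → W x y ∧ W y z

/-- A model structure on a lattice, given by weak equivalences `W`, cofibrations `C`
and fibrations `F`. -/
structure IsModelStructure (W C F : L → L → Prop) : Prop where
  W_subLE : ∀ x y, W x y → x ≤ y
  W_refl : ∀ x, W x x
  C_subLE : ∀ x y, C x y → x ≤ y
  C_refl : ∀ x, C x x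
  F_subLE : ∀ x y, F x y → x ≤ y
  F_refl : ∀ x, F x x
  two_three_comp : ∀ x y z, x ≤ y → y ≤ z → W x y → W y z → W x z
  two_three_right : ∀ x y z, x ≤ y → y ≤ z → W x y → W x z → W y z
  two_three_left : ∀ x y z, x ≤ y → y ≤ z → W y z → W x z → W x y
  lift_AC : ∀ x y, (C x y ∧ W x y) ↔ llp F x y
  lift_C : ∀ x y, C x y ↔ llp (fun a b => F a b ∧ W a b) x y
  lift_F : ∀ x y, F x y ↔ rlp (fun a b => C a b ∧ W a b) x y
  lift_AF : ∀ x y, (F x y ∧ W x y) ↔ rlp C x y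
  fact_C_AF : ∀ x y, x ≤ y → ∃ z, x ≤ z ∧ z ≤ y ∧ C x z ∧ F z y ∧ W z y
  fact_AC_F : ∀ x y, x ≤ y → ∃ z, x ≤ z ∧ z ≤ y ∧ C x z ∧ W x z ∧ F z y

/-- The smallest transfer system containing `S`: the intersection of all transfer
systems containing `S`. -/
def genTS (S : L → L → Prop) (x y : L) : Prop :=
  ∀ T : L → L → Prop, IsTransferSystem T → (∀ a b, S a b → T a b) → T x y

end Defs

/-- A bundled model structure on a lattice. -/
structure ModelStructure (L : Type*) [Lattice L] where
  W : L → L → Prop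
  C : L → L → Prop
  F : L → L → Prop
  isModel : IsModelStructure W C F

/-- `M'` is a left Bousfield localization of `M`: same cofibrations, more weak equivalences. -/
def IsLeftBousfieldLoc {L : Type*} [Lattice L] (M M' : ModelStructure L) : Prop :=
  M'.C = M.C ∧ ∀ x y, M.W x y → M'.W x y

/-- `M'` is a right Bousfield localization of `M`: same fibrations, more weak equivalences. -/
def IsRightBousfieldLoc {L : Type*} [Lattice L] (M M' : ModelStructure L) : Prop :=
  M'.F = M.F ∧ ∀ x y, M.W x y → M'.W x y



def tsRel (p q r : Prop) (x y : Fin 3) : Prop :=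
  x = y ∨ (x = 0 ∧ y = 1 ∧ p) ∨ (x = 1 ∧ y = 2 ∧ q) ∨ (x = 0 ∧ y = 2 ∧ r)

instance (p q r : Prop) [Decidable p] [Decidable q] [Decidable r] (x y : Fin 3) :
    Decidable (tsRel p q r x y) := by unfold tsRel; infer_instance

lemma classifyTS {T : Fin 3 → Fin 3 → Prop} (hT : IsTransferSystem T) (x y : Fin 3) :
    T x y ↔ tsRel (T 0 1) (T 1 2) (T 0 2) x y := by
  constructor
  · intro h
    have hle := hT.subLE x y h
    unfold tsRel
    fin_cases x <;> fin_cases y <;> simp_all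
  · intro h
    rcases h with h | ⟨hx, hy, h⟩ | ⟨hx, hy, h⟩ | ⟨hx, hy, h⟩
    · exact h ▸ hT.refl x
    all_goals subst hx; subst hy; exact h

def fN (a : N5) : Fin 3 → Fin 3 → Prop :=
  tsRel (a = N5.A ∨ a = N5.C ∨ a = N5.one) (a = N5.B ∨ a = N5.one)
    (a = N5.C ∨ a = N5.one)

instance (a : N5) (x y : Fin 3) : Decidable (fN a x y) := by unfold fN; infer_instance

lemma fN_isTS : ∀ a, IsTransferSystem (fN a) := by
  intro a
  constructor <;> revert a <;> decide

lemma fN_mono_iff : ∀ a b : N5, (∀ x y, fN a x y → fN b x y) ↔ a ≤ b := by decide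

lemma tsRel_congr {p q r p' q' r' : Prop} (hp : p ↔ p') (hq : q ↔ q') (hr : r ↔ r') :
    tsRel p q r = tsRel p' q' r' := by
  rw [propext hp, propext hq, propext hr]

/-- The poset of transfer systems on the chain `[2]`, ordered by inclusion,
is order-isomorphic to `N5`. -/
theorem transfer_systems_chain_two_orderIso_N5 :
    Nonempty ({T : Fin 3 → Fin 3 → Prop // IsTransferSystem T} ≃o N5) := by
  have hsurj : ∀ T : {T : Fin 3 → Fin 3 → Prop // IsTransferSystem T},
      ∃ a : N5, (⟨fN a, fN_isTS a⟩ : {T : Fin 3 → Fin 3 → Prop // IsTransferSystem T}) = T := by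
    rintro ⟨T, hT⟩
    have hT' : T = tsRel (T 0 1) (T 1 2) (T 0 2) :=
      funext fun x => funext fun y => propext (classifyTS hT x y)
    have h1 : T 0 2 → T 0 1 := fun h => by
      have h' := hT.pullback 0 2 1 h (by decide)
      have he : (0 : Fin 3) ⊓ 1 = 0 := by decide
      rwa [he] at h'
    have h2 : T 0 1 → T 1 2 → T 0 2 := hT.trans 0 1 2
    by_cases p : T 0 1 <;> by_cases q : T 1 2
    · exact ⟨N5.one, Subtype.ext ((tsRel_congr (iff_of_true (by decide) p)
        (iff_of_true (by decide) q) (iff_of_true (by decide) (h2 p q))).trans hT'.symm)⟩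
    · by_cases r : T 0 2
      · exact ⟨N5.C, Subtype.ext ((tsRel_congr (iff_of_true (by decide) p)
          (iff_of_false (by decide) q) (iff_of_true (by decide) r)).trans hT'.symm)⟩
      · exact ⟨N5.A, Subtype.ext ((tsRel_congr (iff_of_true (by decide) p)
          (iff_of_false (by decide) q) (iff_of_false (by decide) r)).trans hT'.symm)⟩
    · exact ⟨N5.B, Subtype.ext ((tsRel_congr (iff_of_false (by decide) p)
        (iff_of_true (by decide) q)
        (iff_of_false (by decide) (fun r => p (h1 r)))).trans hT'.symm)⟩
    · exact ⟨N5.zero, Subtype.ext ((tsRel_congr (iff_of_false (by decide) p)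
        (iff_of_false (by decide) q)
        (iff_of_false (by decide) (fun r => p (h1 r)))).trans hT'.symm)⟩
  have hinj : Function.Injective
      (fun a : N5 => (⟨fN a, fN_isTS a⟩ : {T : Fin 3 → Fin 3 → Prop // IsTransferSystem T})) := by
    intro a b hab
    have h : fN a = fN b := congrArg Subtype.val hab
    exact le_antisymm
      ((fN_mono_iff a b).mp (fun x y hx => by rw [← h]; exact hx))
      ((fN_mono_iff b a).mp (fun x y hx => by rw [h]; exact hx))
  let e := Equiv.ofBijective _ ⟨hinj, fun T => hsurj T⟩
  refine ⟨(OrderIso.symm ⟨e, ?_⟩ : _)⟩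
  intro a b
  show (⟨fN a, fN_isTS a⟩ : {T : Fin 3 → Fin 3 → Prop // IsTransferSystem T}) ≤ ⟨fN b, fN_isTS b⟩ ↔ a ≤ b
  rw [Subtype.mk_le_mk]
  constructor
  · intro h
    exact (fN_mono_iff a b).mp (fun x y => h x y)
  · intro h x y
    exact (fN_mono_iff a b).mpr h x y
end

section
/- The lattice of transfer systems on N5 is not modular: there exist transfer systems T₁, T₂, T₃ on N5 with T₁ ⊆ T₃ such that ⟨T₁ ∪ (T₂ ∩ T₃)⟩ ≠ ⟨T₁ ∪ T₂⟩ ∩ T₃, where meets are intersections and joins are generated transfer systems. -/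
/-- The lattice of transfer systems on `N5` is not modular. -/
theorem transfer_systems_N5_not_modular :
    ∃ T₁ T₂ T₃ : N5 → N5 → Prop,
      IsTransferSystem T₁ ∧ IsTransferSystem T₂ ∧ IsTransferSystem T₃ ∧
      (∀ x y, T₁ x y → T₃ x y) ∧
      genTS (fun x y => T₁ x y ∨ (T₂ x y ∧ T₃ x y)) ≠
        (fun x y => genTS (fun a b => T₁ a b ∨ T₂ a b) x y ∧ T₃ x y) := by
  classical
  refine ⟨fun x y => x = y ∨ (x = N5.zero ∧ y = N5.A),
          fun x y => x = y ∨ (x = N5.A ∧ y = N5.C),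
          fun x y => x = y ∨ (x = N5.zero ∧ y = N5.A) ∨ (x = N5.zero ∧ y = N5.C),
          ⟨by decide, by decide, by decide, by decide⟩,
          ⟨by decide, by decide, by decide, by decide⟩,
          ⟨by decide, by decide, by decide, by decide⟩,
          by decide, ?_⟩
  intro h
  have h0 := congrFun (congrFun h N5.zero) N5.C
  have hR : genTS (fun a b => (a = b ∨ (a = N5.zero ∧ b = N5.A)) ∨
      a = b ∨ (a = N5.A ∧ b = N5.C)) N5.zero N5.C ∧
      (N5.zero = N5.C ∨ (N5.zero = N5.zero ∧ N5.C = N5.A) ∨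
        (N5.zero = N5.zero ∧ N5.C = N5.C)) := by
    constructor
    · intro T hT hS
      exact hT.trans _ _ _ (hS _ _ (Or.inl (Or.inr ⟨rfl, rfl⟩)))
        (hS _ _ (Or.inr (Or.inr ⟨rfl, rfl⟩)))
    · exact Or.inr (Or.inr ⟨rfl, rfl⟩)
  rw [← h0] at hR
  have hL := hR (fun x y => x = y ∨ (x = N5.zero ∧ y = N5.A))
    ⟨by decide, by decide, by decide, by decide⟩ (by decide)
  exact absurd hL (by decide)
end
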